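/- If C is a ladder system over a stationary set S ⊆ ω₁ of limit ordinals, then every C-Hausdorff pre-gap is S-Hausdorff. -/

import Mathlib

open Set Filter

/-- The first uncountable ordinal. -/
noncomputable def omega1 : Ordinal := (Cardinal.aleph 1).ord

/-- `a ⊆* b` : almost inclusion of subsets of `ω`. -/
def AlSub (a b : Set ℕ) : Prop := (a \ b).Finite

/-- The excess number `X(a,b)` : the least `k` such that `a \ b ⊆ {0,…,k-1}`. -/
noncomputable def excess (a b : Set ℕ) : ℕ := sInf {k | ∀ m ∈ a \ b, m < k}

/-- `D` is a club subset of `ω₁` : it is closed under suprema of its (nonempty)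
bounded subsets and unbounded in `ω₁`. -/
def IsClubSet (D : Set Ordinal) : Prop :=
  D ⊆ Iio omega1 ∧
  (∀ s ⊆ D, s.Nonempty → sSup s < omega1 → sSup s ∈ D) ∧
  (∀ α < omega1, ∃ δ ∈ D, α < δ)

/-- `S` is a stationary subset of `ω₁` : it meets every club. -/
def IsStationarySet (S : Set Ordinal) : Prop :=
  S ⊆ Iio omega1 ∧ ∀ D, IsClubSet D → (S ∩ D).Nonempty

/-- `((a_i)_{i ∈ I}, (b_j)_{j ∈ J})` is a pre-gap: `I, J ⊆ ω₁` are uncountable,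
the `a_i, b_j` are infinite subsets of `ω`, and
`a_{i₀} ⊆* a_{i₁} ⊆* b_{j₁} ⊆* b_{j₀}` whenever `i₀ < i₁` in `I`, `j₀ < j₁` in `J`. -/
def IsPregap (I J : Set Ordinal) (a b : Ordinal → Set ℕ) : Prop :=
  I ⊆ Iio omega1 ∧ J ⊆ Iio omega1 ∧ ¬ I.Countable ∧ ¬ J.Countable ∧
  (∀ i ∈ I, (a i).Infinite) ∧ (∀ j ∈ J, (b j).Infinite) ∧
  (∀ i₀ ∈ I, ∀ i₁ ∈ I, i₀ < i₁ → AlSub (a i₀) (a i₁)) ∧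
  (∀ i ∈ I, ∀ j ∈ J, AlSub (a i) (b j)) ∧
  (∀ j₀ ∈ J, ∀ j₁ ∈ J, j₀ < j₁ → AlSub (b j₁) (b j₀))

/-- `x` is an interpolation of the pre-gap: `a_i ⊆* x ⊆* b_j` for all `i ∈ I`, `j ∈ J`. -/
def IsInterpolation (I J : Set Ordinal) (a b : Ordinal → Set ℕ) (x : Set ℕ) : Prop :=
  (∀ i ∈ I, AlSub (a i) x) ∧ ∀ j ∈ J, AlSub x (b j)

/-- The pre-gap is `S`-Hausdorff: for some club `D`, for every limit `δ ∈ S ∩ D`,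
every `j ∈ J` with `j ≥ δ`, and every strictly increasing sequence `(i n)` of
elements of `I ∩ δ` cofinal in `δ`, `X(a_{i n}, b_j) → ∞`. -/
def SHausdorff (S I J : Set Ordinal) (a b : Ordinal → Set ℕ) : Prop :=
  ∃ D, IsClubSet D ∧ ∀ δ ∈ S ∩ D, Order.IsSuccLimit δ →
    ∀ j ∈ J, δ ≤ j →
      ∀ i : ℕ → Ordinal, StrictMono i → (∀ n, i n ∈ I ∩ Iio δ) →
        (∀ β < δ, ∃ n, β ≤ i n) →
        Tendsto (fun n => excess (a (i n)) (b j)) atTop atTop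

/-- `C` is a ladder system over `S`: for each `δ ∈ S`, `c_δ` is a strictly
increasing `ω`-sequence of ordinals below `δ` cofinal in `δ`. -/
def IsLadder (S : Set Ordinal) (C : Ordinal → ℕ → Ordinal) : Prop :=
  ∀ δ ∈ S, StrictMono (C δ) ∧ (∀ n, C δ n < δ) ∧ ∀ β < δ, ∃ n, β ≤ C δ n

/-- The pre-gap is `C`-Hausdorff: for some club `D`, for every `δ ∈ S ∩ D` and
every `j ∈ J` with `j ≥ δ` there is `k` such that for every `n ≥ k` and every
`i ∈ I` with `c_δ(n) ≤ i < δ`, `X(a_i, b_j) > n`. -/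
def CHausdorff (S : Set Ordinal) (C : Ordinal → ℕ → Ordinal)
    (I J : Set Ordinal) (a b : Ordinal → Set ℕ) : Prop :=
  ∃ D, IsClubSet D ∧ ∀ δ ∈ S ∩ D, ∀ j ∈ J, δ ≤ j →
    ∃ k : ℕ, ∀ n : ℕ, k ≤ n → ∀ i ∈ I, C δ n ≤ i → i < δ →
      n < excess (a i) (b j)

/-- If `C` is a ladder system over a stationary set `S` of limit ordinals,
then every `C`-Hausdorff pre-gap is `S`-Hausdorff. -/
theorem cHausdorff_is_sHausdorff
    (S : Set Ordinal) (C : Ordinal → ℕ → Ordinal)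
    (I J : Set Ordinal) (a b : Ordinal → Set ℕ)
    (hS : IsStationarySet S) (hSlim : ∀ δ ∈ S, Order.IsSuccLimit δ)
    (hC : IsLadder S C)
    (hg : IsPregap I J a b)
    (hCH : CHausdorff S C I J a b) :
    SHausdorff S I J a b := by
  obtain ⟨D, hD, hmain⟩ := hCH
  refine ⟨D, hD, ?_⟩
  intro δ hδ hlim j hj hδj i hmono hiI hcof
  obtain ⟨k, hk⟩ := hmain δ hδ j hj hδj
  rw [tendsto_atTop]
  intro N
  have hCM : C δ (max k N) < δ := (hC δ hδ.1).2.1 (max k N)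
  obtain ⟨n₀, hn₀⟩ := hcof (C δ (max k N)) hCM
  refine eventually_atTop.2 ⟨n₀, fun n hn => ?_⟩
  have h1 : C δ (max k N) ≤ i n := hn₀.trans (hmono.monotone hn)
  have h2 := hk (max k N) (le_max_left _ _) (i n) (hiI n).1 h1 (hiI n).2
  exact le_trans (le_max_right k N) h2.le
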